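/- (Theorem 1, expectation) For every x ∈ ℝ^n, the expected value of the acceptance ratio under the proposal distribution satisfies e_η := ∫_{ℝ^n} η(z, x) g(z) dz = 1/(N₁ · w(x)). -/

import Mathlib

open Matrix MeasureTheory ProbabilityTheory Finset

/-!
Both precision matrices are diagonalised by the same congruence `P = V * L`, where the rows of
`V` are the eigenvectors `v j`: `Γ_cond⁻¹ = Pᵀ diag (σ + μ λⱼ) P` and `Γ̂_cond⁻¹ = Pᵀ diag (eⱼ) P`,
with `eⱼ = σ + μ λⱼ` for `j < k` and `eⱼ = σ` otherwise. The substitution `y = P z` turns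
`w(z) g(z)` into a product of one-dimensional Gaussians, each integrated by completing the square:
the coordinates `j < k` contribute `1` and the others the factors of `N₁⁻¹`. Since
`η(z, x) = w(z) / w(x)`, the expectation is `(N₁ w(x))⁻¹`.
-/

theorem integral_comp_mulVec {ι E : Type*} [Fintype ι] [DecidableEq ι] [NormedAddCommGroup E]
    [NormedSpace ℝ E] {M : Matrix ι ι ℝ} (hM : M.det ≠ 0) (F : (ι → ℝ) → E) :
    ∫ y, F (M *ᵥ y) = |M.det|⁻¹ • ∫ z, F z := by
  have hemb : MeasurableEmbedding (toLin' M) :=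
    (LinearEquiv.toContinuousLinearEquiv
      (toLinearEquiv' M (invertibleOfIsUnitDet M (Ne.isUnit hM)))).toHomeomorph.measurableEmbedding
  have := hemb.integral_map (μ := volume) F
  rw [Real.map_matrix_volume_pi_eq_smul_volume_pi hM, integral_smul_measure,
    ENNReal.toReal_ofReal (by positivity)] at this
  simpa [toLin'_apply] using this.symm

theorem integral_exp_neg_half_mul_sq_add_mul_sub_sq {d e : ℝ} (hde : 0 < d + e) (s : ℝ) :
    ∫ y : ℝ, Real.exp (-(1 / 2) * (d * y ^ 2 + e * (y - s) ^ 2))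
      = Real.sqrt (2 * Real.pi / (d + e)) * Real.exp (-(1 / 2) * (d * e * s ^ 2 / (d + e))) := by
  have key : ∀ y : ℝ, -(1 / 2) * (d * y ^ 2 + e * (y - s) ^ 2)
      = -((d + e) / 2) * (y - e * s / (d + e)) ^ 2 + -(1 / 2) * (d * e * s ^ 2 / (d + e)) := by
    intro y
    field_simp
    ring
  simp_rw [key, Real.exp_add, integral_mul_const]
  rw [integral_sub_right_eq_self (fun y => Real.exp (-((d + e) / 2) * y ^ 2)), integral_gaussian]
  congr 2
  field_simp

theorem dotProduct_transpose_mul_diagonal_mul_mulVec {ι : Type*} [Fintype ι] [DecidableEq ι]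
    (P : Matrix ι ι ℝ) (d z : ι → ℝ) :
    z ⬝ᵥ ((Pᵀ * diagonal d * P) *ᵥ z) = ∑ j, d j * (P *ᵥ z) j ^ 2 := by
  rw [Matrix.mul_assoc, ← mulVec_mulVec, ← mulVec_mulVec, mulVec_transpose, dotProduct_comm,
    ← dotProduct_mulVec, dotProduct]
  simp only [mulVec_diagonal]
  exact sum_congr rfl fun j _ => by ring

theorem integral_exp_neg_half_quadForms {ι : Type*} [Fintype ι] [DecidableEq ι]
    {P : Matrix ι ι ℝ} (hP : P.det ≠ 0) {d e : ι → ℝ} (hde : ∀ j, 0 < d j + e j) (u : ι → ℝ) :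
    ∫ z, Real.exp (-(1 / 2) * (z ⬝ᵥ ((Pᵀ * diagonal d * P) *ᵥ z)
        + (z - u) ⬝ᵥ ((Pᵀ * diagonal e * P) *ᵥ (z - u))))
      = |P.det|⁻¹ * ∏ j, Real.sqrt (2 * Real.pi / (d j + e j))
          * Real.exp (-(1 / 2) * (d j * e j * (P *ᵥ u) j ^ 2 / (d j + e j))) := by
  have hsep : ∀ z, -(1 / 2) * (z ⬝ᵥ ((Pᵀ * diagonal d * P) *ᵥ z)
        + (z - u) ⬝ᵥ ((Pᵀ * diagonal e * P) *ᵥ (z - u)))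
      = ∑ j, -(1 / 2) * (d j * (P *ᵥ z) j ^ 2 + e j * ((P *ᵥ z) j - (P *ᵥ u) j) ^ 2) := by
    intro z
    rw [dotProduct_transpose_mul_diagonal_mul_mulVec, dotProduct_transpose_mul_diagonal_mul_mulVec,
      ← sum_add_distrib, mul_sum, mulVec_sub]
    rfl
  simp_rw [hsep, Real.exp_sum]
  rw [integral_comp_mulVec hP (fun y => ∏ j, Real.exp (-(1 / 2) *
      (d j * y j ^ 2 + e j * (y j - (P *ᵥ u) j) ^ 2))), volume_pi,
    integral_fintype_prod_eq_prod (fun j t => Real.exp (-(1 / 2) *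
      (d j * t ^ 2 + e j * (t - (P *ᵥ u) j) ^ 2))), smul_eq_mul]
  simp_rw [integral_exp_neg_half_mul_sq_add_mul_sub_sq (hde _)]

theorem isUnit_det_transpose_mul_diagonal_mul {ι : Type*} [Fintype ι] [DecidableEq ι]
    {P : Matrix ι ι ℝ} (hP : IsUnit P.det) {d : ι → ℝ} (hd : ∀ j, d j ≠ 0) :
    IsUnit (Pᵀ * diagonal d * P).det := by
  simpa [det_mul, det_diagonal, prod_ne_zero_iff, hd] using hP

theorem det_inv_transpose_mul_diagonal_mul_rpow {ι : Type*} [Fintype ι] [DecidableEq ι]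
    (P : Matrix ι ι ℝ) {e : ι → ℝ} (he : ∀ j, 0 < e j) :
    ((Pᵀ * diagonal e * P)⁻¹).det ^ (-(1 : ℝ) / 2) = |P.det| * ∏ j, Real.sqrt (e j) := by
  have hdet : (Pᵀ * diagonal e * P).det = P.det ^ 2 * ∏ j, e j := by
    rw [det_mul, det_mul, det_transpose, det_diagonal]
    ring
  have he' : 0 ≤ ∏ j, e j := prod_nonneg fun j _ => (he j).le
  rw [det_nonsing_inv, Ring.inverse_eq_inv', hdet, neg_div, Real.rpow_neg (by positivity),
    Real.inv_rpow (by positivity), inv_inv, ← Real.sqrt_eq_rpow, Real.sqrt_mul (sq_nonneg _),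
    Real.sqrt_sq_eq_abs, Real.sqrt_prod _ fun j _ => (he j).le]

theorem integral_exp_neg_half_quadForm_mul_gaussianPDF {ι : Type*} [Fintype ι] [DecidableEq ι]
    {P : Matrix ι ι ℝ} (hP : P.det ≠ 0) {d e : ι → ℝ} (hd : ∀ j, 0 ≤ d j) (he : ∀ j, 0 < e j)
    (u : ι → ℝ) :
    ∫ z, Real.exp (-(1 / 2) * (z ⬝ᵥ ((Pᵀ * diagonal d * P) *ᵥ z))) *
        ((2 * Real.pi) ^ (-(Fintype.card ι : ℝ) / 2) *
          ((Pᵀ * diagonal e * P)⁻¹).det ^ (-(1 : ℝ) / 2) *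
          Real.exp (-(1 / 2) * ((z - u) ⬝ᵥ ((Pᵀ * diagonal e * P) *ᵥ (z - u)))))
      = ∏ j, Real.sqrt (e j / (d j + e j))
          * Real.exp (-(1 / 2) * (d j * e j * (P *ᵥ u) j ^ 2 / (d j + e j))) := by
  have hde : ∀ j, 0 < d j + e j := fun j => add_pos_of_nonneg_of_pos (hd j) (he j)
  set C := (2 * Real.pi) ^ (-(Fintype.card ι : ℝ) / 2) *
    ((Pᵀ * diagonal e * P)⁻¹).det ^ (-(1 : ℝ) / 2) with hC
  have hsplit : ∀ z, Real.exp (-(1 / 2) * (z ⬝ᵥ ((Pᵀ * diagonal d * P) *ᵥ z))) *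
      (C * Real.exp (-(1 / 2) * ((z - u) ⬝ᵥ ((Pᵀ * diagonal e * P) *ᵥ (z - u)))))
      = C * Real.exp (-(1 / 2) * (z ⬝ᵥ ((Pᵀ * diagonal d * P) *ᵥ z)
        + (z - u) ⬝ᵥ ((Pᵀ * diagonal e * P) *ᵥ (z - u)))) := by
    intro z
    rw [mul_add, Real.exp_add]
    ring
  have hpi : (2 * Real.pi) ^ (-(Fintype.card ι : ℝ) / 2)
      = ∏ _j : ι, (Real.sqrt (2 * Real.pi))⁻¹ := by
    rw [prod_const, card_univ, Real.sqrt_eq_rpow, ← Real.rpow_neg (by positivity),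
      ← Real.rpow_mul_natCast (by positivity)]
    ring_nf
  simp_rw [hsplit]
  rw [integral_const_mul, integral_exp_neg_half_quadForms hP hde, hC,
    det_inv_transpose_mul_diagonal_mul_rpow P he, hpi]
  calc _ = (|P.det| * |P.det|⁻¹) * ∏ j, ((Real.sqrt (2 * Real.pi))⁻¹ * Real.sqrt (e j) *
          (Real.sqrt (2 * Real.pi / (d j + e j))
            * Real.exp (-(1 / 2) * (d j * e j * (P *ᵥ u) j ^ 2 / (d j + e j))))) := by
        simp only [prod_mul_distrib]
        ring
    _ = _ := by
      rw [mul_inv_cancel₀ (abs_ne_zero.mpr hP), one_mul]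
      refine prod_congr rfl fun j _ => ?_
      rw [Real.sqrt_div (he j).le, Real.sqrt_div (by positivity)]
      have := Real.sqrt_pos.mpr (hde j)
      field_simp

theorem integral_exp_neg_half_inv_sub_inv_mul_gaussianPDF {ι : Type*} [Fintype ι]
    [DecidableEq ι] {P : Matrix ι ι ℝ} (hP : IsUnit P.det) {d₁ d₂ : ι → ℝ}
    (hd₂ : ∀ j, 0 < d₂ j) (hd : ∀ j, d₂ j ≤ d₁ j) {Γ₁ Γ₂ : Matrix ι ι ℝ}
    (hΓ₁ : Γ₁ = (Pᵀ * diagonal d₁ * P)⁻¹) (hΓ₂ : Γ₂ = (Pᵀ * diagonal d₂ * P)⁻¹) (u : ι → ℝ) :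
    ∫ z, Real.exp (-(1 / 2) * (z ⬝ᵥ ((Γ₁⁻¹ - Γ₂⁻¹) *ᵥ z))) *
        ((2 * Real.pi) ^ (-(Fintype.card ι : ℝ) / 2) * Γ₂.det ^ (-(1 : ℝ) / 2) *
          Real.exp (-(1 / 2) * ((z - u) ⬝ᵥ (Γ₂⁻¹ *ᵥ (z - u)))))
      = ∏ j, Real.sqrt (d₂ j / d₁ j)
          * Real.exp (-(1 / 2) * ((d₁ j - d₂ j) * d₂ j * (P *ᵥ u) j ^ 2 / d₁ j)) := by
  have hΓ₁inv : Γ₁⁻¹ = Pᵀ * diagonal d₁ * P := by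
    rw [hΓ₁, nonsing_inv_nonsing_inv _ (isUnit_det_transpose_mul_diagonal_mul hP fun j =>
      ((hd₂ j).trans_le (hd j)).ne')]
  have hΓ₂inv : Γ₂⁻¹ = Pᵀ * diagonal d₂ * P := by
    rw [hΓ₂, nonsing_inv_nonsing_inv _ (isUnit_det_transpose_mul_diagonal_mul hP fun j =>
      (hd₂ j).ne')]
  rw [hΓ₁inv, hΓ₂inv, ← Matrix.sub_mul, ← Matrix.mul_sub, diagonal_sub, hΓ₂,
    integral_exp_neg_half_quadForm_mul_gaussianPDF hP.ne_zero (fun j => sub_nonneg.mpr (hd j)) hd₂]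
  simp only [sub_add_cancel]

theorem mul_transpose_eq_one_of_orthonormal {ι : Type*} [Fintype ι] [DecidableEq ι] {v : ι → ι → ℝ}
    (horth : ∀ i j, v i ⬝ᵥ v j = if i = j then 1 else 0) : of v * (of v)ᵀ = 1 := by
  ext i j
  simpa [mul_apply, one_apply, dotProduct] using horth i j

theorem sum_smul_vecMulVec_eq_transpose_mul_diagonal_mul {ι κ R : Type*} [Fintype ι]
    [DecidableEq ι] [CommSemiring R] (v : ι → κ → R) (f : ι → R) :
    ∑ j, f j • vecMulVec (v j) (v j) = (of v)ᵀ * diagonal f * of v := by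
  ext i l
  simp only [mul_apply, transpose_apply, of_apply, diagonal_apply, Matrix.sum_apply,
    Matrix.smul_apply, vecMulVec_apply, smul_eq_mul, mul_ite, mul_zero, sum_ite_eq', mem_univ,
    if_true]
  exact sum_congr rfl fun j _ => by ring

theorem transpose_mul_diagonal_add_mul {ι R : Type*} [Fintype ι] [DecidableEq ι] [CommSemiring R]
    (P : Matrix ι ι R) (σ μ : R) (f : ι → R) :
    Pᵀ * diagonal (fun j => σ + μ * f j) * P = σ • (Pᵀ * P) + μ • (Pᵀ * diagonal f * P) := by
  have : diagonal (fun j => σ + μ * f j) = σ • 1 + μ • diagonal f := by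
    ext i j
    by_cases h : i = j <;> simp [one_apply, h]
  rw [this, Matrix.mul_add, Matrix.add_mul, Matrix.mul_smul, Matrix.smul_mul, Matrix.mul_one,
    Matrix.mul_smul, Matrix.smul_mul]

theorem transpose_mul_mul_mul_eq {ι R : Type*} [Fintype ι] [CommSemiring R]
    (V L D : Matrix ι ι R) : (V * L)ᵀ * D * (V * L) = Lᵀ * (Vᵀ * D * V) * L := by
  simp only [transpose_mul, Matrix.mul_assoc]

theorem mulVec_inv_transpose_mul_diagonal_mul_mulVec {ι : Type*} [Fintype ι] [DecidableEq ι]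
    {P : Matrix ι ι ℝ} (hP : IsUnit P.det) {e : ι → ℝ} (he : ∀ j, e j ≠ 0) (x : ι → ℝ) :
    P *ᵥ ((Pᵀ * diagonal e * P)⁻¹ *ᵥ x) = fun j => ((P⁻¹)ᵀ *ᵥ x) j / e j := by
  have hinv : (diagonal e)⁻¹ = diagonal fun j => (e j)⁻¹ :=
    inv_eq_left_inv (by rw [diagonal_mul_diagonal]; simp [he])
  rw [Matrix.mul_inv_rev, Matrix.mul_inv_rev, hinv, ← transpose_nonsing_inv, mulVec_mulVec,
    ← Matrix.mul_assoc, mul_nonsing_inv _ hP, Matrix.one_mul, ← mulVec_mulVec]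
  ext j
  rw [mulVec_diagonal, inv_mul_eq_div]

section

variable {ι κ : Type*} [Fintype ι] [DecidableEq ι] [Fintype κ]
  {A : Matrix κ ι ℝ} {L : Matrix ι ι ℝ} {v : ι → ι → ℝ} {lam : ι → ℝ}

theorem isUnit_det_of_mul_transpose_eq_one (hV : of v * (of v)ᵀ = 1) (hL : IsUnit L.det) :
    IsUnit (of v * L).det := by
  rw [det_mul]
  exact (isUnit_det_of_right_inverse hV).mul hL

theorem transpose_mul_self_eq_of_preconditioned (hL : IsUnit L.det)
    (hH : (L⁻¹)ᵀ * Aᵀ * A * L⁻¹ = ∑ j, lam j • vecMulVec (v j) (v j)) :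
    Aᵀ * A = (of v * L)ᵀ * diagonal lam * (of v * L) := by
  rw [transpose_mul_mul_mul_eq, ← sum_smul_vecMulVec_eq_transpose_mul_diagonal_mul, ← hH]
  simp only [Matrix.mul_assoc]
  rw [nonsing_inv_mul _ hL, Matrix.mul_one, ← Matrix.mul_assoc Lᵀ, transpose_nonsing_inv,
    mul_nonsing_inv _ (by simpa using hL), Matrix.one_mul]

theorem smul_transpose_mul_self_add_smul_transpose_mul_self (hL : IsUnit L.det)
    (hH : (L⁻¹)ᵀ * Aᵀ * A * L⁻¹ = ∑ j, lam j • vecMulVec (v j) (v j))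
    (hV : (of v)ᵀ * of v = 1) (μ σ : ℝ) :
    μ • (Aᵀ * A) + σ • (Lᵀ * L)
      = (of v * L)ᵀ * diagonal (fun j => σ + μ * lam j) * (of v * L) := by
  have hPtP : (of v * L)ᵀ * (of v * L) = Lᵀ * L := by
    rw [transpose_mul, Matrix.mul_assoc, ← Matrix.mul_assoc (of v)ᵀ, hV, Matrix.one_mul]
  rw [transpose_mul_diagonal_add_mul, hPtP, ← transpose_mul_self_eq_of_preconditioned hL hH,
    add_comm]

theorem inv_smul_one_add_smul_sum_filter_conj (hV : (of v)ᵀ * of v = 1) (μ σ : ℝ)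
    (p : ι → Prop) [DecidablePred p] :
    L⁻¹ * (σ • 1 + μ • ∑ j ∈ univ.filter p, lam j • vecMulVec (v j) (v j))⁻¹ * (L⁻¹)ᵀ
      = ((of v * L)ᵀ * diagonal (fun j => σ + μ * if p j then lam j else 0) * (of v * L))⁻¹ := by
  rw [transpose_mul_mul_mul_eq, transpose_mul_diagonal_add_mul, hV,
    ← sum_smul_vecMulVec_eq_transpose_mul_diagonal_mul, sum_filter, Matrix.mul_inv_rev,
    Matrix.mul_inv_rev, ← transpose_nonsing_inv, Matrix.mul_assoc]
  simp only [ite_smul, zero_smul]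

theorem mulVec_mulVec_inv_conj_diagonal (hL : IsUnit L.det) (hV : of v * (of v)ᵀ = 1)
    {e : ι → ℝ} (he : ∀ j, e j ≠ 0) (μ : ℝ) (b : κ → ℝ) :
    (of v * L) *ᵥ (μ • (((of v * L)ᵀ * diagonal e * (of v * L))⁻¹ *ᵥ (Aᵀ *ᵥ b)))
      = fun j => μ * (b ⬝ᵥ (A *ᵥ (L⁻¹ *ᵥ v j))) / e j := by
  have hP := isUnit_det_of_mul_transpose_eq_one hV hL
  have hVinv : (of v)⁻¹ = (of v)ᵀ := inv_eq_right_inv hV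
  rw [mulVec_smul, mulVec_inv_transpose_mul_diagonal_mul_mulVec hP he, Matrix.mul_inv_rev, hVinv,
    transpose_mul, transpose_transpose]
  ext j
  rw [Pi.smul_apply, smul_eq_mul, mul_div_assoc]
  congr 2
  rw [← mulVec_mulVec]
  change v j ⬝ᵥ ((L⁻¹)ᵀ *ᵥ (Aᵀ *ᵥ b)) = _
  rw [mulVec_mulVec, ← transpose_mul, dotProduct_mulVec, vecMul_transpose, dotProduct_comm,
    ← mulVec_mulVec]

end

theorem prod_sqrt_div_mul_exp_eq_inv {ι : Type*} [Fintype ι] {μ σ : ℝ} (hσ : 0 < σ)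
    {lam : ι → ℝ} (hlam : ∀ j, 0 ≤ lam j) (hμ : 0 ≤ μ) (p : ι → Prop) [DecidablePred p]
    (c d e : ι → ℝ) (hd : ∀ j, d j = σ + μ * lam j)
    (he : ∀ j, e j = σ + μ * if p j then lam j else 0) :
    ∏ j, Real.sqrt (e j / d j)
        * Real.exp (-(1 / 2) * ((d j - e j) * e j * (μ * c j / e j) ^ 2 / d j))
      = (Real.exp ((μ ^ 2 / (2 * σ)) *
          ∑ j ∈ univ.filter (fun j => ¬ p j), (μ * lam j / (μ * lam j + σ)) * c j ^ 2) *
        ∏ j ∈ univ.filter (fun j => ¬ p j), Real.sqrt (1 + μ * lam j / σ))⁻¹ := by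
  have hfactor : ∀ j, Real.sqrt (e j / d j)
        * Real.exp (-(1 / 2) * ((d j - e j) * e j * (μ * c j / e j) ^ 2 / d j))
      = if p j then 1 else (Real.sqrt (1 + μ * lam j / σ))⁻¹
          * Real.exp (-((μ ^ 2 / (2 * σ)) * ((μ * lam j / (μ * lam j + σ)) * c j ^ 2))) := by
    intro j
    have hpos : σ + μ * lam j ≠ 0 := by nlinarith [hlam j]
    have hpos' : μ * lam j + σ ≠ 0 := by rwa [add_comm]
    by_cases hp : p j
    · simp [hd, he, hp, hpos]
    · rw [if_neg hp, hd, he, if_neg hp, mul_zero, add_zero,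
        show σ + μ * lam j = σ * (1 + μ * lam j / σ) by field_simp,
        div_mul_cancel_left₀ hσ.ne', Real.sqrt_inv]
      congr 2
      field_simp
      ring
  simp_rw [hfactor]
  rw [prod_ite, prod_const_one, one_mul, prod_mul_distrib, prod_inv_distrib, ← Real.exp_sum,
    sum_neg_distrib, ← mul_sum, Real.exp_neg, mul_inv, mul_comm]

theorem stmt10_general
    (m n : ℕ)
    (A : Matrix (Fin m) (Fin n) ℝ) (L : Matrix (Fin n) (Fin n) ℝ) (hL : IsUnit L.det)
    (μ σ : ℝ) (hμ : 0 < μ) (hσ : 0 < σ)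
    (b : Fin m → ℝ)
    (v : Fin n → Fin n → ℝ) (lam : Fin n → ℝ)
    (horth : ∀ i j, v i ⬝ᵥ v j = if i = j then (1 : ℝ) else 0)
    (hlam_nonneg : ∀ j, 0 ≤ lam j)
    (hHdecomp : (L⁻¹)ᵀ * Aᵀ * A * L⁻¹ = ∑ j, lam j • vecMulVec (v j) (v j))
    (k : ℕ)
    (Γcond : Matrix (Fin n) (Fin n) ℝ)
    (hΓcond : Γcond = (μ • (Aᵀ * A) + σ • (Lᵀ * L))⁻¹)
    (Γhat : Matrix (Fin n) (Fin n) ℝ)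
    (hΓhat : Γhat = L⁻¹ * (σ • (1 : Matrix (Fin n) (Fin n) ℝ) +
        μ • ∑ j ∈ Finset.univ.filter (fun j : Fin n => (j : ℕ) < k),
          lam j • vecMulVec (v j) (v j))⁻¹ * (L⁻¹)ᵀ)
    (xhat : Fin n → ℝ) (hxhat : xhat = μ • (Γhat *ᵥ (Aᵀ *ᵥ b)))
    (w : (Fin n → ℝ) → ℝ)
    (hw : ∀ x, w x = Real.exp (-(1/2) * (x ⬝ᵥ ((Γcond⁻¹ - Γhat⁻¹) *ᵥ x))))
    (η : (Fin n → ℝ) → (Fin n → ℝ) → ℝ)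
    (hη : ∀ z x, η z x = w z / w x)
    (gfun : (Fin n → ℝ) → ℝ)
    (hgfun : ∀ x, gfun x = (2 * Real.pi) ^ (-(n : ℝ) / 2) * Γhat.det ^ (-(1 : ℝ) / 2) *
        Real.exp (-(1/2) * ((x - xhat) ⬝ᵥ (Γhat⁻¹ *ᵥ (x - xhat)))))
    (N : ℕ → ℝ)
    (hN : ∀ ℓ : ℕ, N ℓ = Real.exp ((μ ^ 2 / (2 * σ)) *
        ∑ j ∈ Finset.univ.filter (fun j : Fin n => k ≤ (j : ℕ)),
          (((ℓ : ℝ) * μ * lam j) / ((ℓ : ℝ) * μ * lam j + σ)) *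
            (b ⬝ᵥ (A *ᵥ (L⁻¹ *ᵥ v j))) ^ 2) *
      ∏ j ∈ Finset.univ.filter (fun j : Fin n => k ≤ (j : ℕ)),
        Real.sqrt (1 + (ℓ : ℝ) * μ * lam j / σ))
    :
    ∀ x : Fin n → ℝ,
      (∫ z : Fin n → ℝ, η z x * gfun z) = 1 / (N 1 * w x) := by
  intro x
  set P := of v * L
  set e : Fin n → ℝ := fun j => σ + μ * if (j : ℕ) < k then lam j else 0
  have hV : of v * (of v)ᵀ = 1 := mul_transpose_eq_one_of_orthonormal horth
  have he : ∀ j, 0 < e j ∧ e j ≤ σ + μ * lam j := fun j => by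
    have := hlam_nonneg j
    simp only [e]
    split <;> constructor <;> nlinarith
  have hΓcond' : Γcond = (Pᵀ * diagonal (fun j => σ + μ * lam j) * P)⁻¹ := by
    rw [hΓcond, smul_transpose_mul_self_add_smul_transpose_mul_self hL hHdecomp
      (mul_eq_one_comm.mp hV)]
  have hΓhat' : Γhat = (Pᵀ * diagonal e * P)⁻¹ := by
    rw [hΓhat, inv_smul_one_add_smul_sum_filter_conj (mul_eq_one_comm.mp hV)]
  have hPxhat : P *ᵥ xhat = fun j => μ * (b ⬝ᵥ (A *ᵥ (L⁻¹ *ᵥ v j))) / e j := by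
    rw [hxhat, hΓhat']
    exact mulVec_mulVec_inv_conj_diagonal hL hV (fun j => (he j).1.ne') μ b
  have hgauss := integral_exp_neg_half_inv_sub_inv_mul_gaussianPDF
    (isUnit_det_of_mul_transpose_eq_one hV hL) (fun j => (he j).1) (fun j => (he j).2) hΓcond'
    hΓhat' xhat
  rw [Fintype.card_fin] at hgauss
  have hwg : ∫ z, w z * gfun z = (N 1)⁻¹ := by
    simp only [hw, hgfun]
    rw [hgauss, hPxhat, prod_sqrt_div_mul_exp_eq_inv hσ hlam_nonneg hμ.le _ _ _ e (fun _ => rfl)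
      (fun _ => rfl), hN 1]
    simp only [Nat.cast_one, one_mul, not_lt]
  calc ∫ z, η z x * gfun z = (w x)⁻¹ * ∫ z, w z * gfun z := by
        simp_rw [hη, div_mul_eq_mul_div, div_eq_inv_mul]
        exact integral_const_mul _ _
    _ = 1 / (N 1 * w x) := by rw [hwg, one_div, mul_inv, mul_comm]

theorem stmt10
    (m n : ℕ) (hm : 0 < m) (hn : 0 < n)
    (A : Matrix (Fin m) (Fin n) ℝ) (L : Matrix (Fin n) (Fin n) ℝ) (hL : IsUnit L.det)
    (μ σ : ℝ) (hμ : 0 < μ) (hσ : 0 < σ)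
    (b : Fin m → ℝ)
    (v : Fin n → Fin n → ℝ) (lam : Fin n → ℝ)
    (horth : ∀ i j, v i ⬝ᵥ v j = if i = j then (1 : ℝ) else 0)
    (hlam_nonneg : ∀ j, 0 ≤ lam j) (hlam_anti : Antitone lam)
    (hHdecomp : (L⁻¹)ᵀ * Aᵀ * A * L⁻¹ = ∑ j, lam j • vecMulVec (v j) (v j))
    (k : ℕ) (hk : k ≤ n)
    (Γcond : Matrix (Fin n) (Fin n) ℝ)
    (hΓcond : Γcond = (μ • (Aᵀ * A) + σ • (Lᵀ * L))⁻¹)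
    (Γhat : Matrix (Fin n) (Fin n) ℝ)
    (hΓhat : Γhat = L⁻¹ * (σ • (1 : Matrix (Fin n) (Fin n) ℝ) +
        μ • ∑ j ∈ Finset.univ.filter (fun j : Fin n => (j : ℕ) < k),
          lam j • vecMulVec (v j) (v j))⁻¹ * (L⁻¹)ᵀ)
    (xhat : Fin n → ℝ) (hxhat : xhat = μ • (Γhat *ᵥ (Aᵀ *ᵥ b)))
    (w : (Fin n → ℝ) → ℝ)
    (hw : ∀ x, w x = Real.exp (-(1/2) * (x ⬝ᵥ ((Γcond⁻¹ - Γhat⁻¹) *ᵥ x))))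
    (η : (Fin n → ℝ) → (Fin n → ℝ) → ℝ)
    (hη : ∀ z x, η z x = w z / w x)
    (gfun : (Fin n → ℝ) → ℝ)
    (hgfun : ∀ x, gfun x = (2 * Real.pi) ^ (-(n : ℝ) / 2) * Γhat.det ^ (-(1 : ℝ) / 2) *
        Real.exp (-(1/2) * ((x - xhat) ⬝ᵥ (Γhat⁻¹ *ᵥ (x - xhat)))))
    (N : ℕ → ℝ)
    (hN : ∀ ℓ : ℕ, N ℓ = Real.exp ((μ ^ 2 / (2 * σ)) *
        ∑ j ∈ Finset.univ.filter (fun j : Fin n => k ≤ (j : ℕ)),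
          (((ℓ : ℝ) * μ * lam j) / ((ℓ : ℝ) * μ * lam j + σ)) *
            (b ⬝ᵥ (A *ᵥ (L⁻¹ *ᵥ v j))) ^ 2) *
      ∏ j ∈ Finset.univ.filter (fun j : Fin n => k ≤ (j : ℕ)),
        Real.sqrt (1 + (ℓ : ℝ) * μ * lam j / σ))
    :
    ∀ x : Fin n → ℝ,
      (∫ z : Fin n → ℝ, η z x * gfun z) = 1 / (N 1 * w x) :=
  stmt10_general m n A L hL μ σ hμ hσ b v lam horth hlam_nonneg hHdecomp k Γcond hΓcond Γhat hΓhat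
    xhat hxhat w hw η hη gfun hgfun N hN
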